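/- arXiv:2207.03236 — 6 statements merged into one kernel-verified Lean document; each statement's English description precedes it below -/
import Mathlib

section
/- Let T be a contraction on H. Then Q² := SOT-lim_{n→∞} T^n T*^n exists (as a decreasing limit of positive operators bounded below by 0), and with Q its positive square root, the densely defined map X* : Q h ↦ Q T* h on closure(Ran Q) is well-defined and isometric, i.e., ⟨Q²h, h⟩ = ⟨QT*h, QT*h⟩ for all h ∈ H. -/
open ContinuousLinearMap Filter

set_option synthInstance.maxHeartbeats 1000000
set_option maxHeartbeats 1000000

-- Cauchy–Schwarz-type bound for positive operators
lemma pos_norm_sq_le' {H : Type*} [NormedAddCommGroup H] [InnerProductSpace ℂ H] [CompleteSpace H]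
    {B : H →L[ℂ] H} (hB : B.IsPositive) (h : H) :
    ‖B h‖ ^ 2 ≤ ‖B‖ * RCLike.re (inner ℂ (B h) h : ℂ) := by
  have hB0 : (0 : H →L[ℂ] H) ≤ B := (ContinuousLinearMap.nonneg_iff_isPositive B).mpr hB
  set S := CFC.sqrt B with hSdef
  have hS0 : (0 : H →L[ℂ] H) ≤ S := CFC.sqrt_nonneg _
  have hSsa : IsSelfAdjoint S := IsSelfAdjoint.of_nonneg hS0
  have hSS : S * S = B := by
    have := CFC.sq_sqrt B hB0
    rwa [sq] at this
  have hsym := (isSelfAdjoint_iff_isSymmetric.mp hSsa)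
  have hnorm : ‖S h‖ ^ 2 = RCLike.re (inner ℂ (B h) h : ℂ) := by
    have h1 : (inner ℂ (B h) h : ℂ) = inner ℂ (S h) (S h) := by
      rw [← hSS, ContinuousLinearMap.mul_apply]
      exact hsym (S h) h
    rw [h1]
    exact (inner_self_eq_norm_sq _).symm
  have hBh : B h = S (S h) := by rw [← hSS]; rfl
  have hnormS : ‖S‖ ^ 2 = ‖B‖ := by
    have h5 := CStarRing.norm_star_mul_self (x := S)
    rw [hSsa.star_eq] at h5
    rw [← hSS, h5, sq]
  calc ‖B h‖ ^ 2 = ‖S (S h)‖ ^ 2 := by rw [hBh]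
    _ ≤ (‖S‖ * ‖S h‖) ^ 2 := by
        apply pow_le_pow_left₀ (norm_nonneg _) (S.le_opNorm (S h))
    _ = ‖S‖ ^ 2 * ‖S h‖ ^ 2 := by ring
    _ = ‖B‖ * RCLike.re (inner ℂ (B h) h : ℂ) := by rw [hnormS, hnorm]

/-- For a contraction `T`, the limit `Q² = SOT-lim T^n T*^n` exists with `Q` positive,
and the map `Qh ↦ QT*h` is isometric: `⟨Q²h, h⟩ = ⟨QT*h, QT*h⟩` for all `h`. -/
theorem stmt5 {H : Type*} [NormedAddCommGroup H] [InnerProductSpace ℂ H] [CompleteSpace H]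
    (T : H →L[ℂ] H) (hT : ‖T‖ ≤ 1) :
    ∃ Q : H →L[ℂ] H, Q.IsPositive ∧
      (∀ h : H, Tendsto (fun n : ℕ => (T ^ n * (adjoint T) ^ n) h) atTop (nhds ((Q * Q) h))) ∧
      (∀ h : H, (inner ℂ ((Q * Q) h) h : ℂ) = inner ℂ (Q (adjoint T h)) (Q (adjoint T h))) := by
  set S : H →L[ℂ] H := adjoint T with hSdef
  have hS : ‖S‖ ≤ 1 := le_trans (le_of_eq (adjoint.norm_map T)) hT
  set A : ℕ → H →L[ℂ] H := fun n => T ^ n * S ^ n with hAdef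
  have hSpow : ∀ n : ℕ, S ^ n = adjoint (T ^ n) := by
    intro n
    rw [hSdef, ← star_eq_adjoint, ← star_eq_adjoint, ← star_pow]
  -- each A n is positive
  have hApos : ∀ n, (A n).IsPositive := by
    intro n
    have h1 := (isPositive_one (E := H) (𝕜 := ℂ)).conj_adjoint (T ^ n)
    have h2 : (T ^ n) ∘L (1 : H →L[ℂ] H) ∘L (adjoint (T ^ n)) = A n := by
      rw [hAdef]; ext x; simp [hSpow n, mul_apply]
    rwa [h2] at h1
  -- contraction bound for S ^ n
  have hSn : ∀ (n : ℕ) (h : H), ‖(S ^ n) h‖ ≤ ‖h‖ := by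
    intro n
    induction n with
    | zero => intro h; simp
    | succ n ih =>
        intro h
        rw [pow_succ, ContinuousLinearMap.mul_apply]
        refine (ih (S h)).trans ?_
        calc ‖S h‖ ≤ ‖S‖ * ‖h‖ := S.le_opNorm h
          _ ≤ 1 * ‖h‖ := mul_le_mul_of_nonneg_right hS (norm_nonneg h)
          _ = ‖h‖ := one_mul _
  -- inner products: ⟪A n h, h⟫ = ‖S^n h‖²
  have hinner : ∀ (n : ℕ) (h : H), (inner ℂ ((A n) h) h : ℂ) = ((‖(S ^ n) h‖ ^ 2 : ℝ) : ℂ) := by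
    intro n h
    have : ((A n) h : H) = (T ^ n) ((S ^ n) h) := rfl
    rw [this, ← adjoint_inner_right (T ^ n) ((S ^ n) h) h, ← hSpow n]
    rw [inner_self_eq_norm_sq_to_K]
    norm_num
  -- the real sequence c n h is antitone
  set c : ℕ → H → ℝ := fun n h => ‖(S ^ n) h‖ ^ 2 with hcdef
  have hcanti : ∀ h : H, Antitone (fun n => c n h) := by
    intro h
    apply antitone_nat_of_succ_le
    intro n
    simp only [hcdef]
    have : (S ^ (n + 1)) h = S ((S ^ n) h) := by rw [pow_succ']; rfl
    rw [this]
    have h1 : ‖S ((S ^ n) h)‖ ≤ ‖(S ^ n) h‖ := by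
      calc ‖S ((S ^ n) h)‖ ≤ ‖S‖ * ‖(S ^ n) h‖ := S.le_opNorm _
        _ ≤ 1 * ‖(S ^ n) h‖ := mul_le_mul_of_nonneg_right hS (norm_nonneg _)
        _ = _ := one_mul _
    exact pow_le_pow_left₀ (norm_nonneg _) h1 2
  have hcnonneg : ∀ n h, 0 ≤ c n h := fun n h => sq_nonneg _
  -- c converges
  have hcconv : ∀ h : H, ∃ l : ℝ, Tendsto (fun n => c n h) atTop (nhds l) := by
    intro h
    refine ⟨⨅ n, c n h, tendsto_atTop_ciInf (hcanti h) ⟨0, fun x ⟨n, hn⟩ => hn ▸ hcnonneg n h⟩⟩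
  -- A is antitone (in the Loewner order)
  have hAanti : Antitone A := by
    apply antitone_nat_of_succ_le
    intro n
    rw [ContinuousLinearMap.le_def]
    rw [ContinuousLinearMap.isPositive_iff_complex]
    intro x
    have : (inner ℂ (((A n - A (n + 1))) x) x : ℂ) = ((c n x - c (n + 1) x : ℝ) : ℂ) := by
      rw [ContinuousLinearMap.sub_apply, inner_sub_left, hinner n x, hinner (n + 1) x]
      norm_cast
    rw [this]
    refine ⟨by norm_cast, ?_⟩
    have h9 := sub_nonneg.mpr (hcanti x (Nat.le_succ n))
    simpa using h9
  -- norm bound on A n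
  have hAnorm : ∀ (n : ℕ) (h : H), ‖(A n) h‖ ≤ ‖h‖ := by
    intro n h
    have : ((A n) h : H) = (T ^ n) ((S ^ n) h) := rfl
    rw [this]
    have hTn : ∀ (m : ℕ) (x : H), ‖(T ^ m) x‖ ≤ ‖x‖ := by
      intro m
      induction m with
      | zero => intro x; simp
      | succ m ih =>
          intro x
          rw [pow_succ, ContinuousLinearMap.mul_apply]
          refine (ih (T x)).trans ?_
          calc ‖T x‖ ≤ ‖T‖ * ‖x‖ := T.le_opNorm x
            _ ≤ 1 * ‖x‖ := mul_le_mul_of_nonneg_right hT (norm_nonneg x)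
            _ = ‖x‖ := one_mul _
    exact (hTn n _).trans (hSn n h)
  have hABnorm : ∀ m n : ℕ, ‖A m - A n‖ ≤ 2 := by
    intro m n
    have h1 : ∀ k, ‖A k‖ ≤ 1 := by
      intro k
      exact opNorm_le_bound _ zero_le_one (fun h => by rw [one_mul]; exact hAnorm k h)
    calc ‖A m - A n‖ ≤ ‖A m‖ + ‖A n‖ := norm_sub_le _ _
      _ ≤ 1 + 1 := add_le_add (h1 m) (h1 n)
      _ = 2 := by norm_num
  -- key Cauchy estimate
  have hkey : ∀ (m n : ℕ), m ≤ n → ∀ h : H, ‖(A m) h - (A n) h‖ ^ 2 ≤ 2 * (c m h - c n h) := by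
    intro m n hmn h
    have hpos : (A m - A n).IsPositive := by
      rw [← ContinuousLinearMap.le_def]; exact hAanti hmn
    have h1 := pos_norm_sq_le' hpos h
    have h2 : ((A m - A n)) h = (A m) h - (A n) h := rfl
    rw [h2] at h1
    have h3 : RCLike.re (inner ℂ ((A m) h - (A n) h) h : ℂ) = c m h - c n h := by
      rw [inner_sub_left, hinner m h, hinner n h]
      norm_cast
    rw [h3] at h1
    refine h1.trans ?_
    have h4 : 0 ≤ c m h - c n h := sub_nonneg.mpr (hcanti h hmn)
    nlinarith [hABnorm m n]
  -- A n h is Cauchy, hence converges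
  have hAconv : ∀ h : H, ∃ l : H, Tendsto (fun n => (A n) h) atTop (nhds l) := by
    intro h
    obtain ⟨l, hl⟩ := hcconv h
    have hcauchy : CauchySeq (fun n => (A n) h) := by
      rw [Metric.cauchySeq_iff]
      intro ε hε
      have hccauchy : CauchySeq (fun n => c n h) := hl.cauchySeq
      rw [Metric.cauchySeq_iff] at hccauchy
      obtain ⟨N, hN⟩ := hccauchy (ε ^ 2 / 2) (by positivity)
      refine ⟨N, fun m hm n hn => ?_⟩
      have key : ∀ p q : ℕ, p ≤ q → N ≤ p → N ≤ q → dist ((A p) h) ((A q) h) < ε := by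
        intro p q hpq hp hq
        have h1 := hkey p q hpq h
        have h2 := hN p hp q hq
        rw [Real.dist_eq] at h2
        have h3 : c p h - c q h < ε ^ 2 / 2 := lt_of_abs_lt h2
        rw [dist_eq_norm]
        nlinarith [norm_nonneg ((A p) h - (A q) h), sub_nonneg.mpr (hcanti h hpq)]
      rcases le_total m n with hmn | hnm
      · exact key m n hmn hm hn
      · rw [dist_comm]; exact key n m hnm hn hm
    exact cauchySeq_tendsto_of_complete hcauchy
  choose L hL using hAconv
  -- L is linear and bounded
  have hLadd : ∀ x y : H, L (x + y) = L x + L y := by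
    intro x y
    refine tendsto_nhds_unique (hL (x + y)) ?_
    exact ((hL x).add (hL y)).congr (fun n => (map_add (A n) x y).symm)
  have hLsmul : ∀ (r : ℂ) (x : H), L (r • x) = r • L x := by
    intro r x
    refine tendsto_nhds_unique (hL (r • x)) ?_
    exact ((hL x).const_smul r).congr (fun n => (map_smul (A n) r x).symm)
  set P : H →L[ℂ] H := LinearMap.mkContinuous
    { toFun := L, map_add' := hLadd, map_smul' := hLsmul } 1
    (fun h => by
      rw [one_mul]
      exact le_of_tendsto (hL h).norm (Eventually.of_forall (fun n => hAnorm n h)))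
    with hPdef
  have hPapp : ∀ h, P h = L h := fun h => rfl
  have hPtend : ∀ h, Tendsto (fun n => (A n) h) atTop (nhds (P h)) := by
    intro h; rw [hPapp]; exact hL h
  -- P is positive
  have hPinner : ∀ x y : H, Tendsto (fun n => (inner ℂ ((A n) x) y : ℂ)) atTop (nhds (inner ℂ (P x) y)) := by
    intro x y
    exact (hPtend x).inner tendsto_const_nhds
  have hPpos : P.IsPositive := by
    rw [ContinuousLinearMap.isPositive_iff_complex]
    intro x
    have h1 : Tendsto (fun n => ((c n x : ℝ) : ℂ)) atTop (nhds (inner ℂ (P x) x)) := by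
      refine (hPinner x x).congr (fun n => by rw [hinner n x])
    obtain ⟨l, hl⟩ := hcconv x
    have h2 : Tendsto (fun n => ((c n x : ℝ) : ℂ)) atTop (nhds ((l : ℝ) : ℂ)) := by
      exact (Complex.continuous_ofReal.tendsto l).comp hl
    have h3 : (inner ℂ (P x) x : ℂ) = ((l : ℝ) : ℂ) := tendsto_nhds_unique h1 h2
    rw [h3]
    refine ⟨by norm_cast, ?_⟩
    have h4 : (0:ℝ) ≤ l := le_of_tendsto_of_tendsto' tendsto_const_nhds hl (fun n => hcnonneg n x)
    simpa using h4
  have hP0 : (0 : H →L[ℂ] H) ≤ P := (ContinuousLinearMap.nonneg_iff_isPositive P).mpr hPpos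
  -- Q = sqrt P
  set Q : H →L[ℂ] H := CFC.sqrt P with hQdef
  have hQ0 : (0 : H →L[ℂ] H) ≤ Q := CFC.sqrt_nonneg _
  have hQQ : Q * Q = P := by
    have := CFC.sq_sqrt P hP0; rw [sq] at this; rw [hQdef, this]
  have hQsa : IsSelfAdjoint Q := IsSelfAdjoint.of_nonneg hQ0
  have hQsym := isSelfAdjoint_iff_isSymmetric.mp hQsa
  refine ⟨Q, (ContinuousLinearMap.nonneg_iff_isPositive Q).mp hQ0, ?_, ?_⟩
  · intro h
    rw [hQQ]
    exact hPtend h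
  · intro h
    rw [hQQ]
    -- RHS = ⟪P (S h), S h⟫
    have hrhs : (inner ℂ (Q (S h)) (Q (S h)) : ℂ) = inner ℂ (P (S h)) (S h) := by
      have h0 : (inner ℂ ((Q * Q) (S h)) (S h) : ℂ) = inner ℂ (Q (S h)) (Q (S h)) :=
        hQsym (Q (S h)) (S h)
      rw [← h0, hQQ]
    rw [hrhs]
    -- both sides are limits of (shifted) c
    obtain ⟨l, hl⟩ := hcconv h
    have hshift : ∀ n, c n (S h) = c (n + 1) h := by
      intro n
      have e : (S ^ (n + 1)) h = (S ^ n) (S h) := by rw [pow_succ]; rfl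
      simp only [hcdef, e]
    have h1 : Tendsto (fun n => ((c n h : ℝ) : ℂ)) atTop (nhds (inner ℂ (P h) h)) :=
      (hPinner h h).congr (fun n => by rw [hinner n h])
    have h2 : Tendsto (fun n => ((c n (S h) : ℝ) : ℂ)) atTop (nhds (inner ℂ (P (S h)) (S h))) :=
      (hPinner (S h) (S h)).congr (fun n => by rw [hinner n (S h)])
    have hlc : Tendsto (fun n => ((c n h : ℝ) : ℂ)) atTop (nhds ((l : ℝ) : ℂ)) :=
      (Complex.continuous_ofReal.tendsto l).comp hl
    have hlc' : Tendsto (fun n => ((c n (S h) : ℝ) : ℂ)) atTop (nhds ((l : ℝ) : ℂ)) := by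
      have : Tendsto (fun n => c (n + 1) h) atTop (nhds l) := hl.comp (tendsto_add_atTop_nat 1)
      have := (Complex.continuous_ofReal.tendsto l).comp this
      exact this.congr (fun n => by simp only [Function.comp_apply, hshift n])
    have e1 : (inner ℂ (P h) h : ℂ) = ((l : ℝ) : ℂ) := tendsto_nhds_unique h1 hlc
    have e2 : (inner ℂ (P (S h)) (S h) : ℂ) = ((l : ℝ) : ℂ) := tendsto_nhds_unique h2 hlc'
    rw [e1, e2]
end

section
/- Let T₁, ..., T_d be commuting contractions on H with product T = T₁⋯T_d, and let Q² = SOT-lim T^n T*^n. Then for each i, T_i Q² T_i* ≤ Q², and hence there exists a contraction X_i* on closure(Ran Q) satisfying X_i* Q = Q T_i*. -/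
/-!
Write `P = T₁⋯T_d`. Each `T_i` commutes with `P`, so `T_i*` commutes with `P*`, and
`‖Q x‖ = lim ‖P*ⁿ x‖` because `‖P*ⁿ x‖² = ⟪Pⁿ P*ⁿ x, x⟫ → ⟪Q² x, x⟫`. Hence
`‖Q T_i* x‖ = lim ‖T_i* P*ⁿ x‖ ≤ lim ‖P*ⁿ x‖ = ‖Q x‖`. This inequality makes
`Q x ↦ Q T_i* x` a well-defined contraction on `Ran Q` (the Douglas factorization), which
extends by continuity to `closure (Ran Q)`.
-/

open ContinuousLinearMap Filter

/-- The closure of the range of an operator, as a submodule. -/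
noncomputable def ranClosure {H : Type*} [NormedAddCommGroup H] [InnerProductSpace ℂ H]
    (Q : H →L[ℂ] H) : Submodule ℂ H :=
  (LinearMap.range (Q : H →ₗ[ℂ] H)).topologicalClosure

theorem mem_ranClosure {H : Type*} [NormedAddCommGroup H] [InnerProductSpace ℂ H]
    (Q : H →L[ℂ] H) (h : H) : Q h ∈ ranClosure Q :=
  Submodule.le_topologicalClosure _ ⟨h, rfl⟩

theorem LinearMap.denseRange_codRestrict_topologicalClosure
    {𝕜 E F : Type*} [Ring 𝕜] [AddCommGroup E] [Module 𝕜 E]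
    [AddCommGroup F] [Module 𝕜 F] [TopologicalSpace F] [IsTopologicalAddGroup F]
    [ContinuousConstSMul 𝕜 F]
    (A : E →ₗ[𝕜] F) :
    DenseRange (A.codRestrict (LinearMap.range A).topologicalClosure
      fun x => (LinearMap.range A).le_topologicalClosure (LinearMap.mem_range_self A x)) :=
  ((denseRange_inclusion_iff (LinearMap.range A).le_topologicalClosure).2 subset_rfl).comp
    A.surjective_rangeRestrict.denseRange (continuous_inclusion _)

theorem LinearMap.exists_norm_le_one_apply_eq_of_norm_le
    {𝕜 E F G : Type*} [NontriviallyNormedField 𝕜] [AddCommGroup E] [Module 𝕜 E]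
    [NormedAddCommGroup F] [NormedSpace 𝕜 F] [NormedAddCommGroup G] [NormedSpace 𝕜 G]
    [CompleteSpace G] (A : E →ₗ[𝕜] F) (B : E →ₗ[𝕜] G) (hBA : ∀ x, ‖B x‖ ≤ ‖A x‖) :
    ∃ X : (LinearMap.range A).topologicalClosure →L[𝕜] G, ‖X‖ ≤ 1 ∧
      ∀ x, X ⟨A x, (LinearMap.range A).le_topologicalClosure (LinearMap.mem_range_self A x)⟩ =
        B x := by
  have hdense := A.denseRange_codRestrict_topologicalClosure
  have hbound : ∀ x, ‖B x‖ ≤ 1 * ‖A.codRestrict (LinearMap.range A).topologicalClosure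
      (fun x => (LinearMap.range A).le_topologicalClosure (LinearMap.mem_range_self A x)) x‖ :=
    fun x => (hBA x).trans_eq (one_mul _).symm
  exact ⟨B.extendOfNorm _, opNorm_extendOfNorm_le hdense zero_le_one hbound,
    extendOfNorm_eq hdense ⟨1, hbound⟩⟩

theorem le_of_tendsto_norm_pow_apply_of_commute {𝕜 E : Type*} [NontriviallyNormedField 𝕜]
    [SeminormedAddCommGroup E] [NormedSpace 𝕜 E] {A S : E →L[𝕜] E} (hS : ‖S‖ ≤ 1)
    (hSA : Commute S A) {q : E → ℝ}
    (hq : ∀ x, Tendsto (fun n => ‖(A ^ n) x‖) atTop (nhds (q x))) (x : E) : q (S x) ≤ q x := by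
  refine le_of_tendsto_of_tendsto' (hq (S x)) (hq x) fun n => ?_
  calc ‖(A ^ n) (S x)‖ = ‖S ((A ^ n) x)‖ :=
        congrArg norm (DFunLike.congr_fun (hSA.pow_right n).eq x).symm
    _ ≤ ‖S‖ * ‖(A ^ n) x‖ := le_opNorm _ _
    _ ≤ ‖(A ^ n) x‖ := mul_le_of_le_one_left (norm_nonneg _) hS

theorem ContinuousLinearMap.tendsto_norm_adjoint_pow_apply {𝕜 E : Type*} [RCLike 𝕜]
    [NormedAddCommGroup E] [InnerProductSpace 𝕜 E] [CompleteSpace E] {P Q : E →L[𝕜] E}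
    (hQ : IsSelfAdjoint Q)
    (hlim : ∀ x, Tendsto (fun n => (P ^ n * adjoint P ^ n) x) atTop (nhds ((Q * Q) x))) (x : E) :
    Tendsto (fun n => ‖(adjoint P ^ n) x‖) atTop (nhds ‖Q x‖) := by
  have hsq : Tendsto (fun n => ‖(adjoint P ^ n) x‖ ^ 2) atTop (nhds (‖Q x‖ ^ 2)) := by
    have hre : Continuous fun y : E => RCLike.re (inner 𝕜 y x) :=
      RCLike.continuous_re.comp (continuous_id.inner continuous_const)
    have hn : ∀ n,
        ‖(adjoint P ^ n) x‖ ^ 2 = RCLike.re (inner 𝕜 ((P ^ n * adjoint P ^ n) x) x) := fun n => by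
      rw [apply_norm_sq_eq_inner_adjoint_left, ← star_eq_adjoint (adjoint P ^ n), star_pow,
        star_eq_adjoint, adjoint_adjoint]; rfl
    rw [apply_norm_sq_eq_inner_adjoint_left, hQ.adjoint_eq, funext hn]
    exact (hre.tendsto _).comp (hlim x)
  simpa only [Real.sqrt_sq (norm_nonneg _)] using hsq.sqrt

theorem stmt6_general {H : Type*} [NormedAddCommGroup H] [InnerProductSpace ℂ H] [CompleteSpace H]
    (d : ℕ) (T : Fin d → H →L[ℂ] H)
    (hT : ∀ i, ‖T i‖ ≤ 1) (hcomm : ∀ i j, Commute (T i) (T j))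
    (Q : H →L[ℂ] H) (hQpos : Q.IsPositive)
    (hQ : ∀ h : H, Tendsto
      (fun n : ℕ => (((List.ofFn T).prod) ^ n * (adjoint ((List.ofFn T).prod)) ^ n) h)
      atTop (nhds ((Q * Q) h))) :
    ∀ i : Fin d,
      (∀ h : H, ‖Q (adjoint (T i) h)‖ ^ 2 ≤ ‖Q h‖ ^ 2) ∧
      ∃ X : ranClosure Q →L[ℂ] ranClosure Q, ‖X‖ ≤ 1 ∧
        ∀ h : H, ((X ⟨Q h, mem_ranClosure Q h⟩ : ranClosure Q) : H) = Q (adjoint (T i) h) := by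
  intro i
  have hcommP : Commute (T i) (List.ofFn T).prod := Commute.list_prod_right _ _ fun S hS => by
    obtain ⟨j, rfl⟩ := List.mem_ofFn.mp hS
    exact hcomm i j
  have hcomm_adjoint : Commute (adjoint (T i)) (adjoint (List.ofFn T).prod) := by
    simpa only [star_eq_adjoint] using hcommP.star_star
  have hTi : ‖adjoint (T i)‖ ≤ 1 := (LinearIsometryEquiv.norm_map _ _).trans_le (hT i)
  have hle : ∀ h, ‖Q (adjoint (T i) h)‖ ≤ ‖Q h‖ :=
    le_of_tendsto_norm_pow_apply_of_commute (q := fun h => ‖Q h‖) hTi hcomm_adjoint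
      (tendsto_norm_adjoint_pow_apply hQpos.isSelfAdjoint hQ)
  refine ⟨fun h => pow_le_pow_left₀ (norm_nonneg _) (hle h) 2, ?_⟩
  have : CompleteSpace (ranClosure Q) := Submodule.topologicalClosure.completeSpace _
  obtain ⟨X, hXnorm, hX⟩ := (Q : H →ₗ[ℂ] H).exists_norm_le_one_apply_eq_of_norm_le
    ((Q ∘L adjoint (T i)).codRestrict (ranClosure Q) fun h => mem_ranClosure Q _).toLinearMap
    hle
  exact ⟨X, hXnorm, fun h => congrArg Subtype.val (hX h)⟩

/-- Let `T 0, …, T (d-1)` be commuting contractions with product `P`, and `Q ≥ 0` with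
`Q² = SOT-lim P^n P*^n`. Then for each `i`, `T_i Q² T_i* ≤ Q²`, and there is a contraction
`X_i*` on `closure(Ran Q)` with `X_i* Q = Q T_i*`. -/
theorem stmt6 {H : Type*} [NormedAddCommGroup H] [InnerProductSpace ℂ H] [CompleteSpace H]
    (d : ℕ) (hd : 1 ≤ d) (T : Fin d → H →L[ℂ] H)
    (hT : ∀ i, ‖T i‖ ≤ 1) (hcomm : ∀ i j, Commute (T i) (T j))
    (Q : H →L[ℂ] H) (hQpos : Q.IsPositive)
    (hQ : ∀ h : H, Tendsto
      (fun n : ℕ => (((List.ofFn T).prod) ^ n * (adjoint ((List.ofFn T).prod)) ^ n) h)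
      atTop (nhds ((Q * Q) h))) :
    ∀ i : Fin d,
      (∀ h : H, ‖Q (adjoint (T i) h)‖ ^ 2 ≤ ‖Q h‖ ^ 2) ∧
      ∃ X : ranClosure Q →L[ℂ] ranClosure Q, ‖X‖ ≤ 1 ∧
        ∀ h : H, ((X ⟨Q h, mem_ranClosure Q h⟩ : ranClosure Q) : H) = Q (adjoint (T i) h) :=
  stmt6_general d T hT hcomm Q hQpos hQ
end

section
/- Let P be an orthogonal projection and U a unitary operator on a Hilbert space F. Then the multiplication operator M_{U(P^⊥ + zP)} acting on the vector-valued Hardy space H²(F), given by (M f)(z) = U(P^⊥ + zP) f(z), is an isometry. -/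
/-!
Split `x = P^⊥x + Px` into orthogonal parts. Since `U` is an isometry, the coefficient
`(Mf)ₙ₊₁ = U(P^⊥fₙ₊₁ + Pfₙ)` has squared norm `‖P^⊥fₙ₊₁‖² + ‖Pfₙ‖²`, so `‖Mf‖²` is
`∑ ‖P^⊥fₙ‖² + ∑ ‖Pfₙ‖²` with the second series shifted by one place,
which is `∑ ‖fₙ‖² = ‖f‖²`.
-/

open ContinuousLinearMap

theorem HasSum.of_eq_add_shift {G : Type*} [AddCommGroup G] [TopologicalSpace G]
    [IsTopologicalAddGroup G] {a b g : ℕ → G} {A B : G} (ha : HasSum a A) (hb : HasSum b B)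
    (hg₀ : g 0 = a 0) (hg : ∀ n, g (n + 1) = a (n + 1) + b n) : HasSum g (A + B) := by
  have hshift : HasSum (fun n => g n - a n) B := by
    rw [← hasSum_nat_add_iff' 1]
    simpa [hg₀, hg] using hb
  simpa using ha.add hshift

theorem lp.hasSum_norm_sq {ι : Type*} {E : ι → Type*} [∀ i, NormedAddCommGroup (E i)]
    (f : lp E 2) : HasSum (fun i => ‖f i‖ ^ 2) (‖f‖ ^ 2) := by
  simpa using lp.hasSum_norm (p := 2) (by norm_num) f

namespace IsStarProjection

variable {𝕜 E : Type*} [RCLike 𝕜] [NormedAddCommGroup E] [InnerProductSpace 𝕜 E]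
  [CompleteSpace E] {P : E →L[𝕜] E}

theorem inner_one_sub_apply_apply_eq_zero (hP : IsStarProjection P) (x y : E) :
    inner 𝕜 ((1 - P) x) (P y) = 0 := by
  have hPP : P (P x) = P x := congrArg (· x) hP.isIdempotentElem.eq
  calc inner 𝕜 ((1 - P) x) (P y) = inner 𝕜 (P ((1 - P) x)) y :=
        (hP.isSelfAdjoint.isSymmetric _ _).symm
    _ = 0 := by simp [hPP]

theorem norm_one_sub_apply_add_apply_sq (hP : IsStarProjection P) (x y : E) :
    ‖(1 - P) x + P y‖ ^ 2 = ‖(1 - P) x‖ ^ 2 + ‖P y‖ ^ 2 := by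
  rw [@norm_add_sq 𝕜, inner_one_sub_apply_apply_eq_zero hP, map_zero, mul_zero, add_zero]

theorem norm_sq_eq_norm_one_sub_apply_sq_add_norm_apply_sq (hP : IsStarProjection P) (x : E) :
    ‖x‖ ^ 2 = ‖(1 - P) x‖ ^ 2 + ‖P x‖ ^ 2 := by
  have hx : (1 - P) x + P x = x := by simp
  rw [← norm_one_sub_apply_add_apply_sq hP, hx]

end IsStarProjection

/-- `H²(F)` is modelled by `ℓ²(ℕ, F)` of Taylor coefficients, where multiplication by
`U(P^⊥ + zP)` reads `(Mf)₀ = UP^⊥f₀`, `(Mf)ₙ₊₁ = UP^⊥fₙ₊₁ + UPfₙ`. -/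
theorem stmt7_general {F : Type*} [NormedAddCommGroup F] [InnerProductSpace ℂ F] [CompleteSpace F]
    (U P : F →L[ℂ] F)
    (hPidem : P * P = P) (hPsa : IsSelfAdjoint P)
    (hU1 : adjoint U * U = 1)
    (M : lp (fun _ : ℕ => F) 2 →L[ℂ] lp (fun _ : ℕ => F) 2)
    (hM0 : ∀ f : lp (fun _ : ℕ => F) 2, (M f) 0 = U ((1 - P) (f 0)))
    (hMs : ∀ (f : lp (fun _ : ℕ => F) 2) (n : ℕ),
      (M f) (n + 1) = U ((1 - P) (f (n + 1))) + U (P (f n))) :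
    ∀ f : lp (fun _ : ℕ => F) 2, ‖M f‖ = ‖f‖ := by
  intro f
  have hP : IsStarProjection P := ⟨hPidem, hPsa⟩
  have hU : ∀ x, ‖U x‖ = ‖x‖ := U.norm_map_iff_adjoint_comp_self.mpr hU1
  have hf := lp.hasSum_norm_sq f
  have hsplit : (fun n => ‖f n‖ ^ 2) = fun n => ‖(1 - P) (f n)‖ ^ 2 + ‖P (f n)‖ ^ 2 :=
    funext fun n => hP.norm_sq_eq_norm_one_sub_apply_sq_add_norm_apply_sq (f n)
  rw [hsplit] at hf
  have hA : Summable fun n => ‖(1 - P) (f n)‖ ^ 2 :=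
    hf.summable.of_nonneg_of_le (fun _ => by positivity)
      fun _ => le_add_of_nonneg_right (by positivity)
  have hB : Summable fun n => ‖P (f n)‖ ^ 2 :=
    hf.summable.of_nonneg_of_le (fun _ => by positivity)
      fun _ => le_add_of_nonneg_left (by positivity)
  have hMf : HasSum (fun n => ‖M f n‖ ^ 2) (‖f‖ ^ 2) := by
    rw [hf.unique (hA.hasSum.add hB.hasSum)]
    refine hA.hasSum.of_eq_add_shift hB.hasSum (by rw [hM0, hU]) fun n => ?_
    rw [hMs, ← map_add, hU, hP.norm_one_sub_apply_add_apply_sq]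
  exact (pow_left_inj₀ (norm_nonneg _) (norm_nonneg _) two_ne_zero).mp
    ((lp.hasSum_norm_sq (M f)).unique hMf)

/-- Let `P` be an orthogonal projection and `U` a unitary on a Hilbert space `F`. The
multiplication operator `M_{U(P^⊥ + zP)}` on the Hardy space `H²(F)` (modelled as
`ℓ²(ℕ, F)` of Taylor coefficients, acting by `(Mf)₀ = UP^⊥f₀`,
`(Mf)ₙ₊₁ = UP^⊥fₙ₊₁ + UPfₙ`) is an isometry. -/
theorem stmt7 {F : Type*} [NormedAddCommGroup F] [InnerProductSpace ℂ F] [CompleteSpace F]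
    (U P : F →L[ℂ] F)
    (hPidem : P * P = P) (hPsa : IsSelfAdjoint P)
    (hU1 : adjoint U * U = 1) (hU2 : U * adjoint U = 1)
    (M : lp (fun _ : ℕ => F) 2 →L[ℂ] lp (fun _ : ℕ => F) 2)
    (hM0 : ∀ f : lp (fun _ : ℕ => F) 2, (M f) 0 = U ((1 - P) (f 0)))
    (hMs : ∀ (f : lp (fun _ : ℕ => F) 2) (n : ℕ),
      (M f) (n + 1) = U ((1 - P) (f (n + 1))) + U (P (f n))) :
    ∀ f : lp (fun _ : ℕ => F) 2, ‖M f‖ = ‖f‖ :=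
  stmt7_general U P hPidem hPsa hU1 M hM0 hMs
end

section
/- Let T be a contraction on H and define Π_D : H → H²(𝒟_{T*}) ⊕ closure(Ran Q) by Π_D h = (Σ_{n≥0} z^n D_{T*} T*^n h) ⊕ Q h, where Q² = SOT-lim T^n T*^n. Then Π_D is an isometry. -/
open ContinuousLinearMap Filter

/-!
Since `D_{T*}² = 1 - TT*`, we have `‖D_{T*} x‖² = ‖x‖² - ‖T* x‖²`, so the terms of the series
telescope: `‖D_{T*} T*ⁿ h‖² = ‖T*ⁿ h‖² - ‖T*ⁿ⁺¹ h‖²`. The partial sums are therefore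
`‖h‖² - ‖T*ⁿ h‖² = ‖h‖² - re ⟪Tⁿ T*ⁿ h, h⟫`, which converge to `‖h‖² - ⟪Q² h, h⟫ = ‖h‖² - ‖Q h‖²`.
-/

open scoped InnerProductSpace InnerProduct

theorem hasSum_sub_succ_of_antitone {a : ℕ → ℝ} {L : ℝ} (ha : Antitone a)
    (hL : Tendsto a atTop (nhds L)) : HasSum (fun n => a n - a (n + 1)) (a 0 - L) := by
  rw [hasSum_iff_tendsto_nat_of_nonneg (fun n => sub_nonneg.2 (ha n.le_succ))]
  simpa only [Finset.sum_range_sub'] using tendsto_const_nhds.sub hL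

section

variable {𝕜 E : Type*} [RCLike 𝕜] [NormedAddCommGroup E] [InnerProductSpace 𝕜 E] [CompleteSpace E]

theorem IsSelfAdjoint.norm_apply_sq {A : E →L[𝕜] E} (hA : IsSelfAdjoint A) (x : E) :
    ‖A x‖ ^ 2 = RCLike.re ⟪(A * A) x, x⟫_𝕜 := by
  rw [apply_norm_sq_eq_inner_adjoint_left, hA.adjoint_eq]
  rfl

theorem IsSelfAdjoint.norm_apply_sq_of_mul_self_eq_one_sub {D S : E →L[𝕜] E}
    (hD : IsSelfAdjoint D) (hD2 : D * D = 1 - S† * S) (x : E) :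
    ‖D x‖ ^ 2 = ‖x‖ ^ 2 - ‖S x‖ ^ 2 := by
  rw [hD.norm_apply_sq, hD2, sub_apply, one_apply_eq_self, inner_sub_left, map_sub,
    inner_self_eq_norm_sq, apply_norm_sq_eq_inner_adjoint_left]
  rfl

theorem ContinuousLinearMap.norm_adjoint_pow_apply_sq (T : E →L[𝕜] E) (n : ℕ) (x : E) :
    ‖(T† ^ n) x‖ ^ 2 = RCLike.re ⟪(T ^ n * T† ^ n) x, x⟫_𝕜 := by
  rw [apply_norm_sq_eq_inner_adjoint_left, ← star_eq_adjoint, star_pow, star_eq_adjoint,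
    adjoint_adjoint]
  rfl

theorem ContinuousLinearMap.tendsto_norm_adjoint_pow_apply_sq {T Q : E →L[𝕜] E}
    (hQ : IsSelfAdjoint Q) {x : E}
    (hlim : Tendsto (fun n : ℕ => (T ^ n * T† ^ n) x) atTop (nhds ((Q * Q) x))) :
    Tendsto (fun n : ℕ => ‖(T† ^ n) x‖ ^ 2) atTop (nhds (‖Q x‖ ^ 2)) := by
  simp only [norm_adjoint_pow_apply_sq, hQ.norm_apply_sq]
  exact (RCLike.continuous_re.tendsto _).comp (hlim.inner tendsto_const_nhds)

end

theorem stmt10_general {H : Type*} [NormedAddCommGroup H] [InnerProductSpace ℂ H] [CompleteSpace H]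
    (T Dstar Q : H →L[ℂ] H)
    (hDpos : Dstar.IsPositive) (hD2 : Dstar * Dstar = 1 - T * adjoint T)
    (hQpos : Q.IsPositive)
    (hQ : ∀ h : H, Tendsto (fun n : ℕ => (T ^ n * (adjoint T) ^ n) h) atTop
      (nhds ((Q * Q) h))) :
    ∀ h : H,
      Summable (fun n : ℕ => ‖Dstar (((adjoint T) ^ n) h)‖ ^ 2) ∧
      (∑' n : ℕ, ‖Dstar (((adjoint T) ^ n) h)‖ ^ 2) + ‖Q h‖ ^ 2 = ‖h‖ ^ 2 := by
  intro h
  have hdefect : Dstar * Dstar = 1 - (T†)† * T† := by rw [adjoint_adjoint, hD2]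
  have hterm (n : ℕ) :
      ‖Dstar ((T† ^ n) h)‖ ^ 2 = ‖(T† ^ n) h‖ ^ 2 - ‖(T† ^ (n + 1)) h‖ ^ 2 := by
    rw [hDpos.isSelfAdjoint.norm_apply_sq_of_mul_self_eq_one_sub hdefect, pow_succ' (T†),
      mul_apply_eq_comp]
  have hanti : Antitone fun n => ‖(T† ^ n) h‖ ^ 2 :=
    antitone_nat_of_succ_le fun n => sub_nonneg.1 (hterm n ▸ sq_nonneg _)
  have hsum := hasSum_sub_succ_of_antitone hanti
    (tendsto_norm_adjoint_pow_apply_sq hQpos.isSelfAdjoint (hQ h))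
  simp only [← hterm, pow_zero, one_apply_eq_self] at hsum
  exact ⟨hsum.summable, by rw [hsum.tsum_eq]; ring⟩

/-- Let `T` be a contraction, `D* = (1 - TT*)^{1/2}` and `Q ≥ 0` with
`Q² = SOT-lim T^n T*^n`. Then the Douglas embedding
`Π_D h = (Σ z^n D_{T*} T*^n h) ⊕ Qh` is an isometry:
`Σ_{n} ‖D_{T*}T*^n h‖² + ‖Qh‖² = ‖h‖²` (with the series summable). -/
theorem stmt10 {H : Type*} [NormedAddCommGroup H] [InnerProductSpace ℂ H] [CompleteSpace H]
    (T Dstar Q : H →L[ℂ] H) (hT : ‖T‖ ≤ 1)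
    (hDpos : Dstar.IsPositive) (hD2 : Dstar * Dstar = 1 - T * adjoint T)
    (hQpos : Q.IsPositive)
    (hQ : ∀ h : H, Tendsto (fun n : ℕ => (T ^ n * (adjoint T) ^ n) h) atTop
      (nhds ((Q * Q) h))) :
    ∀ h : H,
      Summable (fun n : ℕ => ‖Dstar (((adjoint T) ^ n) h)‖ ^ 2) ∧
      (∑' n : ℕ, ‖Dstar (((adjoint T) ^ n) h)‖ ^ 2) + ‖Q h‖ ^ 2 = ‖h‖ ^ 2 :=
  stmt10_general T Dstar Q hDpos hD2 hQpos hQ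
end

section
/- The symmetrized bidisk 𝔾 = {(λ₁+λ₂, λ₁λ₂) : λ₁, λ₂ ∈ 𝔻} equals the set {(s,p) ∈ ℂ² : 1 - sz + pz² ≠ 0 for all z with |z| ≤ 1}. -/
lemma factor_id (l1 l2 z : ℂ) :
    1 - (l1 + l2) * z + (l1 * l2) * z ^ 2 = (1 - l1 * z) * (1 - l2 * z) := by ring

lemma one_sub_ne (l z : ℂ) (hl : ‖l‖ < 1) (hz : ‖z‖ ≤ 1) : 1 - l * z ≠ 0 := by
  intro h
  have : l * z = 1 := by linear_combination -h
  have h1 : ‖l * z‖ = 1 := by rw [this]; simp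
  have : ‖l * z‖ < 1 := by
    rw [norm_mul]
    calc ‖l‖ * ‖z‖ ≤ ‖l‖ * 1 := by
          exact mul_le_mul_of_nonneg_left hz (norm_nonneg l)
      _ < 1 := by simpa using hl
  linarith [h1, this]

lemma norm_lt_of_ne (l1 l2 : ℂ)
    (h : ∀ z : ℂ, ‖z‖ ≤ 1 → 1 - (l1 + l2) * z + (l1 * l2) * z ^ 2 ≠ 0) :
    ‖l1‖ < 1 := by
  by_contra hc
  push_neg at hc
  have hl1 : l1 ≠ 0 := by
    intro h0; rw [h0] at hc; simp at hc; linarith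
  have hz : ‖l1⁻¹‖ ≤ 1 := by
    rw [norm_inv]
    rw [inv_le_one_iff₀]
    right; exact hc
  have := h l1⁻¹ hz
  apply this
  rw [factor_id]
  have : 1 - l1 * l1⁻¹ = 0 := by
    rw [mul_inv_cancel₀ hl1]; ring
  rw [this, zero_mul]

/-- The symmetrized bidisk `𝔾 = {(λ₁+λ₂, λ₁λ₂) : λ₁, λ₂ ∈ 𝔻}` equals
`{(s,p) : 1 - sz + pz² ≠ 0 for all |z| ≤ 1}`. -/
theorem stmt13 :
    {p : ℂ × ℂ | ∃ l1 l2 : ℂ, ‖l1‖ < 1 ∧ ‖l2‖ < 1 ∧ p = (l1 + l2, l1 * l2)} =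
    {p : ℂ × ℂ | ∀ z : ℂ, ‖z‖ ≤ 1 → 1 - p.1 * z + p.2 * z ^ 2 ≠ 0} := by
  ext ⟨s, p⟩
  simp only [Set.mem_setOf_eq]
  constructor
  · rintro ⟨l1, l2, h1, h2, heq⟩ z hz
    obtain ⟨hs, hp⟩ : s = l1 + l2 ∧ p = l1 * l2 := by
      constructor <;> simp [Prod.ext_iff] at heq <;> tauto
    rw [hs, hp, factor_id]
    exact mul_ne_zero (one_sub_ne l1 z h1 hz) (one_sub_ne l2 z h2 hz)
  · intro h
    obtain ⟨d, hd⟩ : ∃ d : ℂ, d ^ 2 = s ^ 2 - 4 * p :=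
      ⟨(s ^ 2 - 4 * p) ^ ((2 : ℕ) : ℂ)⁻¹, by
        have := Complex.cpow_nat_inv_pow (s ^ 2 - 4 * p) (two_ne_zero)
        exact this⟩
    set l1 := (s + d) / 2 with hl1
    set l2 := (s - d) / 2 with hl2
    have hsum : s = l1 + l2 := by rw [hl1, hl2]; ring
    have hprod : p = l1 * l2 := by
      rw [hl1, hl2]
      have : (s + d) / 2 * ((s - d) / 2) = (s ^ 2 - d ^ 2) / 4 := by ring
      rw [this, hd]; ring
    have h' : ∀ z : ℂ, ‖z‖ ≤ 1 → 1 - (l1 + l2) * z + (l1 * l2) * z ^ 2 ≠ 0 := by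
      intro z hz
      rw [← hsum, ← hprod]
      exact h z hz
    have h'' : ∀ z : ℂ, ‖z‖ ≤ 1 → 1 - (l2 + l1) * z + (l2 * l1) * z ^ 2 ≠ 0 := by
      intro z hz
      have := h' z hz
      rw [add_comm l2 l1, mul_comm l2 l1]
      exact this
    exact ⟨l1, l2, norm_lt_of_ne l1 l2 h', norm_lt_of_ne l2 l1 h'',
      by rw [hsum, hprod]⟩
end

section
/- If a point x = (x₁, x₂, x₃) ∈ ℂ³ satisfies 1 - x₁z - x₂w + x₃zw ≠ 0 for all |z| ≤ 1, |w| ≤ 1, then the matrix A = [[x₁, x₁x₂ - x₃],[1, x₂]] satisfies π_E(A) = (a₁₁, a₂₂, det A) = x and det(I - diag(z,w)·A) ≠ 0 for all |z| ≤ 1, |w| ≤ 1. -/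
/-- If `x = (x₁,x₂,x₃) ∈ ℂ³` satisfies `1 - x₁z - x₂w + x₃zw ≠ 0` for all `|z| ≤ 1`,
`|w| ≤ 1` (i.e. `x` lies in the tetrablock), then the matrix
`A = [[x₁, x₁x₂-x₃],[1, x₂]]` satisfies `π_E(A) = (a₁₁, a₂₂, det A) = x` and
`det(I - diag(z,w)·A) ≠ 0` for all `|z| ≤ 1`, `|w| ≤ 1`. -/
theorem stmt14 (x1 x2 x3 : ℂ)
    (hx : ∀ z w : ℂ, ‖z‖ ≤ 1 → ‖w‖ ≤ 1 → 1 - x1 * z - x2 * w + x3 * (z * w) ≠ 0) :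
    (!![x1, x1 * x2 - x3; 1, x2] : Matrix (Fin 2) (Fin 2) ℂ) 0 0 = x1 ∧
    (!![x1, x1 * x2 - x3; 1, x2] : Matrix (Fin 2) (Fin 2) ℂ) 1 1 = x2 ∧
    (!![x1, x1 * x2 - x3; 1, x2] : Matrix (Fin 2) (Fin 2) ℂ).det = x3 ∧
    (∀ z w : ℂ, ‖z‖ ≤ 1 → ‖w‖ ≤ 1 →
      (1 - Matrix.diagonal ![z, w] * !![x1, x1 * x2 - x3; 1, x2]).det ≠ 0) := by
  refine ⟨by simp, by simp, by simp [Matrix.det_fin_two], ?_⟩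
  intro z w hz hw
  have h := hx z w hz hw
  have key : (1 - Matrix.diagonal ![z, w] * !![x1, x1 * x2 - x3; 1, x2]).det
      = 1 - x1 * z - x2 * w + x3 * (z * w) := by
    simp [Matrix.det_fin_two, Matrix.mul_apply, Fin.sum_univ_succ, Matrix.one_apply,
      Matrix.diagonal]
    ring
  rw [key]; exact h
end
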